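/- Every consistent normal modal logic L is either contained in K + {□p ↔ p} or contained in K + {□p} (Makinson's theorem). Consequently, for any formula χ in L, either the 'forgetful' translation χ^f (erasing all boxes) or the 'collapse' translation χ^c (replacing every □φ by ⊤) is a classical tautology uniformly for all χ ∈ L. -/

import Mathlib

/-! ## Basic machinery: strings, polynomial time, NP, circuits, formulas -/

/-- The trivial finite encoding of binary strings over the alphabet `Bool`. -/
def listBoolEncoding : Computability.Encoding (List Bool) Bool where
  encode := id
  decode := fun l => some l
  decode_encode := fun _ => rfl

/-- A function on binary strings is polynomial-time computable if some
two-stack Turing machine computes it in polynomial time. -/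
def PolyTimeComputable (f : List Bool → List Bool) : Prop :=
  Nonempty (Turing.TM2ComputableInPolyTime listBoolEncoding.encode listBoolEncoding.encode f)

/-- An injective pairing of binary strings. -/
def pairEnc (u w : List Bool) : List Bool :=
  (u.map fun b => [true, b]).flatten ++ false :: w

/-- A predicate on binary strings is polynomial-time decidable. -/
def PolyTimeDecidable (P : List Bool → Prop) : Prop :=
  ∃ f, PolyTimeComputable f ∧ ∀ w, P w ↔ f w = [true]

/-- A binary predicate on binary strings is polynomial-time decidable. -/
def PolyTimeDecidable2 (P : List Bool → List Bool → Prop) : Prop :=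
  ∃ f, PolyTimeComputable f ∧ ∀ u w, P u w ↔ f (pairEnc u w) = [true]

/-- `L ∈ NP`: there are a polynomial-time decidable binary predicate `R` and a
polynomial `p` with `w ∈ L` iff some witness `u` with `|u| ≤ p (|w|)` satisfies `R u w`. -/
def InNP (L : Set (List Bool)) : Prop :=
  ∃ (R : List Bool → List Bool → Prop) (p : Polynomial ℕ),
    PolyTimeDecidable2 R ∧ ∀ w, w ∈ L ↔ ∃ u, u.length ≤ p.eval w.length ∧ R u w

/-- `L ∈ P`. -/
def InP (L : Set (List Bool)) : Prop := PolyTimeDecidable (· ∈ L)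

/-- A gate of a Boolean circuit with `s` gates: a constant, an input gate reading
input variable `a : ℕ`, or a negation/conjunction/disjunction of earlier gates. -/
inductive CGate (s : ℕ) : Type where
  | const : Bool → CGate s
  | input : ℕ → CGate s
  | not : Fin s → CGate s
  | and : Fin s → Fin s → CGate s
  | or : Fin s → Fin s → CGate s

/-- The gates referenced by a gate. -/
def CGate.deps {s : ℕ} : CGate s → List (Fin s)
  | .const _ => []
  | .input _ => []
  | .not j => [j]
  | .and j k => [j, k]
  | .or j k => [j, k]

/-- A Boolean circuit (as a DAG of gates, without a chosen output). -/
structure CircuitBase where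
  size : ℕ
  gates : Fin size → CGate size
  wf : ∀ i : Fin size, ∀ j ∈ (gates i).deps, (j : ℕ) < (i : ℕ)

/-- Evaluate gate `i` of a circuit under an assignment `v` to the input variables. -/
def CircuitBase.evalGate (c : CircuitBase) (v : ℕ → Bool) (i : Fin c.size) : Bool :=
  match h : c.gates i with
  | .const b => b
  | .input a => v a
  | .not j => !(c.evalGate v j)
  | .and j k => c.evalGate v j && c.evalGate v k
  | .or j k => c.evalGate v j || c.evalGate v k
termination_by (i : ℕ)
decreasing_by
  · exact c.wf i j (by rw [h]; simp [CGate.deps])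
  · exact c.wf i j (by rw [h]; simp [CGate.deps])
  · exact c.wf i k (by rw [h]; simp [CGate.deps])
  · exact c.wf i j (by rw [h]; simp [CGate.deps])
  · exact c.wf i k (by rw [h]; simp [CGate.deps])

/-- The circuit reads only input variables from `S`. -/
def CircuitBase.InputsIn (c : CircuitBase) (S : Set ℕ) : Prop :=
  ∀ (i : Fin c.size) (a : ℕ), c.gates i = CGate.input a → a ∈ S

/-- A monotone circuit: no negation gates. -/
def CircuitBase.MonotoneC (c : CircuitBase) : Prop :=
  ∀ (i j : Fin c.size), c.gates i ≠ CGate.not j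

/-- A single-output Boolean circuit. -/
structure Circuit extends CircuitBase where
  out : Fin size

/-- Evaluate a circuit on an assignment to the input variables. -/
def Circuit.eval (c : Circuit) (v : ℕ → Bool) : Bool :=
  c.toCircuitBase.evalGate v c.out

/-- A multi-output Boolean circuit. -/
structure MultiCircuit extends CircuitBase where
  outs : List (Fin size)

/-- Evaluate a multi-output circuit on an assignment to the input variables. -/
def MultiCircuit.eval (c : MultiCircuit) (v : ℕ → Bool) : List Bool :=
  c.outs.map (c.toCircuitBase.evalGate v)

/-- `pad_m(w) = 1w₁1w₂…1w_l 0…0` of total length `2m`. -/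
def padBits (m : ℕ) (w : List Bool) : List Bool :=
  (w.map fun b => [true, b]).flatten ++ List.replicate (2 * m - 2 * w.length) false

/-- A function on binary strings is computable by polynomial-size circuits:
a family `Cₙ` of multi-output circuits of size polynomial in `n`, where
`Cₙ` reads input bits `0,…,n-1` and outputs the padded value of `f` on
every input of length `n`. -/
def PolySizeComputable (f : List Bool → List Bool) : Prop :=
  ∃ (C : ℕ → MultiCircuit) (outLen : ℕ → ℕ) (p : Polynomial ℕ),
    ∀ n, (C n).size ≤ p.eval n ∧ (C n).toCircuitBase.InputsIn {a | a < n} ∧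
      ∀ w : List Bool, w.length = n →
        (f w).length ≤ outLen n ∧
        (C n).eval (fun a => w.getD a false) = padBits (outLen n) (f w)

/-- `L ∈ P/poly`: a polynomial-size circuit family decides membership in `L`. -/
def InPPoly (L : Set (List Bool)) : Prop :=
  ∃ (C : ℕ → Circuit) (p : Polynomial ℕ),
    ∀ n, (C n).size ≤ p.eval n ∧ (C n).toCircuitBase.InputsIn {a | a < n} ∧
      ∀ w : List Bool, w.length = n →
        (w ∈ L ↔ (C n).eval (fun a => w.getD a false) = true)

/-- A proof system for a language `L`: a polynomial-time decidable binary relation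
`Pr` such that `w ∈ L` iff `w` has a `Pr`-proof. -/
def IsProofSystem (Pr : List Bool → List Bool → Prop) (L : Set (List Bool)) : Prop :=
  PolyTimeDecidable2 Pr ∧ ∀ w, w ∈ L ↔ ∃ u, Pr u w

/-- A proof system is polynomially bounded if every member of `L` has a proof of
size polynomial in its length. -/
def PolyBounded (Pr : List Bool → List Bool → Prop) (L : Set (List Bool)) : Prop :=
  ∃ p : Polynomial ℕ, ∀ w ∈ L, ∃ u, Pr u w ∧ u.length ≤ p.eval w.length

/-- One-way protocols. -/
structure OneWayProtocol where
  /-- the polynomial-time decidable predicate of source data -/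
  Pred : List Bool → Prop
  /-- the public transformation -/
  h : List Bool → List Bool
  /-- the derived secret information -/
  k : List Bool → List Bool
  /-- computes (in unary) the length of `k u` from `h u` -/
  lenFun : List Bool → List Bool
  /-- the bounding polynomial -/
  bnd : Polynomial ℕ
  pred_dec : PolyTimeDecidable Pred
  h_poly : PolyTimeComputable h
  k_poly : PolyTimeComputable k
  lenFun_poly : PolyTimeComputable lenFun
  /-- semi-injectivity -/
  semi_inj : ∀ u₁ u₂, Pred u₁ → Pred u₂ → h u₁ = h u₂ → k u₁ = k u₂
  /-- `|k u|` is polynomial-time computable from `h u` -/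
  len_eq : ∀ u, (k u).length = (lenFun (h u)).length
  /-- boundedness: `|u| ≤ bnd (|h u|)` -/
  bounded : ∀ u, u.length ≤ bnd.eval (h u).length
  /-- security against `P/poly` adversaries -/
  secure : ¬ ∃ f : List Bool → List Bool, PolySizeComputable f ∧ ∀ u, k u = f (h u)

/-! ## Propositional formulas -/

/-- Propositional formulas over `{⊤, ⊥, ∧, ∨, →}` with variables indexed by `ℕ`. -/
inductive PropForm : Type where
  | tr : PropForm
  | fls : PropForm
  | var : ℕ → PropForm
  | and : PropForm → PropForm → PropForm
  | or : PropForm → PropForm → PropForm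
  | imp : PropForm → PropForm → PropForm
deriving DecidableEq

/-- Negation abbreviates `φ → ⊥`. -/
def PropForm.neg (φ : PropForm) : PropForm := φ.imp .fls

/-- Classical Boolean evaluation of a formula. -/
def PropForm.eval (v : ℕ → Bool) : PropForm → Bool
  | .tr => true
  | .fls => false
  | .var a => v a
  | .and φ ψ => φ.eval v && ψ.eval v
  | .or φ ψ => φ.eval v || ψ.eval v
  | .imp φ ψ => !(φ.eval v) || ψ.eval v

/-- A classical tautology. -/
def PropForm.Taut (φ : PropForm) : Prop := ∀ v, φ.eval v = true

/-- The variables occurring in a formula. -/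
def PropForm.vars : PropForm → Finset ℕ
  | .tr => ∅
  | .fls => ∅
  | .var a => {a}
  | .and φ ψ => φ.vars ∪ ψ.vars
  | .or φ ψ => φ.vars ∪ ψ.vars
  | .imp φ ψ => φ.vars ∪ ψ.vars

/-- The size of a formula. -/
def PropForm.size : PropForm → ℕ
  | .tr => 1
  | .fls => 1
  | .var _ => 1
  | .and φ ψ => φ.size + ψ.size + 1
  | .or φ ψ => φ.size + ψ.size + 1
  | .imp φ ψ => φ.size + ψ.size + 1

/-- Substitution of formulas for variables. -/
def PropForm.subst (σ : ℕ → PropForm) : PropForm → PropForm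
  | .tr => .tr
  | .fls => .fls
  | .var a => σ a
  | .and φ ψ => .and (φ.subst σ) (ψ.subst σ)
  | .or φ ψ => .or (φ.subst σ) (ψ.subst σ)
  | .imp φ ψ => .imp (φ.subst σ) (ψ.subst σ)

/-- A monotone formula: built from atoms, `⊤`, `⊥`, `∧`, `∨` only (no implication). -/
def PropForm.IsMonotone : PropForm → Prop
  | .tr => True
  | .fls => True
  | .var _ => True
  | .and φ ψ => φ.IsMonotone ∧ ψ.IsMonotone
  | .or φ ψ => φ.IsMonotone ∧ ψ.IsMonotone
  | .imp _ _ => False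

/-- `MonoIn P b φ` holds if every occurrence in `φ` of a variable from `P` has
polarity allowed by `b` (`b = true`: positive occurrences only are constrained;
a variable of `P` may occur with polarity `b` but not opposite).
`MonoIn P true φ` says `φ` is monotone in the variables of `P`
(no negated occurrence of a `P`-variable in negation normal form). -/
def MonoIn (P : Finset ℕ) : Bool → PropForm → Prop
  | _, .tr => True
  | _, .fls => True
  | b, .var a => b = true ∨ a ∉ P
  | b, .and φ ψ => MonoIn P b φ ∧ MonoIn P b ψ
  | b, .or φ ψ => MonoIn P b φ ∧ MonoIn P b ψ
  | b, .imp φ ψ => MonoIn P (!b) φ ∧ MonoIn P b ψ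

/-- Conjunction of a list of formulas. -/
def conjList (Γ : List PropForm) : PropForm := Γ.foldr PropForm.and .tr

/-- Disjunction of a list of formulas. -/
def disjList (Δ : List PropForm) : PropForm := Δ.foldr PropForm.or .fls

/-- `⋀_{i<m} (pᵢ ∨ ¬pᵢ)`. -/
def excludedMiddleConj (m : ℕ) : PropForm :=
  conjList ((List.range m).map fun i => (PropForm.var i).or (PropForm.var i).neg)

/-- Hilbert-style provability in intuitionistic propositional logic `IPC`. -/
inductive IPC : PropForm → Prop
  | mp {φ ψ : PropForm} : IPC (φ.imp ψ) → IPC φ → IPC ψ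
  | ax1 (φ ψ : PropForm) : IPC (φ.imp (ψ.imp φ))
  | ax2 (φ ψ χ : PropForm) : IPC ((φ.imp (ψ.imp χ)).imp ((φ.imp ψ).imp (φ.imp χ)))
  | axAndI (φ ψ : PropForm) : IPC (φ.imp (ψ.imp (φ.and ψ)))
  | axAndL (φ ψ : PropForm) : IPC ((φ.and ψ).imp φ)
  | axAndR (φ ψ : PropForm) : IPC ((φ.and ψ).imp ψ)
  | axOrL (φ ψ : PropForm) : IPC (φ.imp (φ.or ψ))
  | axOrR (φ ψ : PropForm) : IPC (ψ.imp (φ.or ψ))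
  | axOrE (φ ψ χ : PropForm) : IPC ((φ.imp χ).imp ((ψ.imp χ).imp ((φ.or ψ).imp χ)))
  | axFls (φ : PropForm) : IPC (PropForm.fls.imp φ)
  | axTr : IPC .tr

/-- Unary encoding of a natural number as a binary string. -/
def natBits (n : ℕ) : List Bool := List.replicate n true ++ [false]

/-- An encoding of propositional formulas as binary strings. -/
def PropForm.encode : PropForm → List Bool
  | .tr => [false, false, false]
  | .fls => [false, false, true]
  | .var a => [false, true] ++ natBits a
  | .and φ ψ => [true, false, false] ++ φ.encode ++ ψ.encode
  | .or φ ψ => [true, false, true] ++ φ.encode ++ ψ.encode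
  | .imp φ ψ => [true, true] ++ φ.encode ++ ψ.encode

/-- The language of (codes of) classical propositional tautologies. -/
def CPClang : Set (List Bool) := {w | ∃ φ : PropForm, φ.Taut ∧ w = φ.encode}

/-- The formula computed by a circuit (unfolding the DAG into a tree). -/
def CircuitBase.gateForm (c : CircuitBase) (i : Fin c.size) : PropForm :=
  match h : c.gates i with
  | .const b => if b then .tr else .fls
  | .input a => .var a
  | .not j => (c.gateForm j).neg
  | .and j k => (c.gateForm j).and (c.gateForm k)
  | .or j k => (c.gateForm j).or (c.gateForm k)
termination_by (i : ℕ)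
decreasing_by
  · exact c.wf i j (by rw [h]; simp [CGate.deps])
  · exact c.wf i j (by rw [h]; simp [CGate.deps])
  · exact c.wf i k (by rw [h]; simp [CGate.deps])
  · exact c.wf i j (by rw [h]; simp [CGate.deps])
  · exact c.wf i k (by rw [h]; simp [CGate.deps])

/-- The formula `[C]` of a single-output circuit `C`. -/
def Circuit.toForm (c : Circuit) : PropForm := c.toCircuitBase.gateForm c.out

/-- `[C]` is a Craig interpolant for `φ → ψ`: `C` reads only the shared
variables, and for every assignment `v`, `φ(v) = 1` implies `C(v) = 1`, and
`C(v) = 1` implies `ψ(v) = 1`. -/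
def Interpolates (C : Circuit) (φ ψ : PropForm) : Prop :=
  C.toCircuitBase.InputsIn {a | a ∈ φ.vars ∩ ψ.vars} ∧
  ∀ v : ℕ → Bool, (φ.eval v = true → C.eval v = true) ∧ (C.eval v = true → ψ.eval v = true)

/-- Feasible interpolation of a proof system for `CPC`: from any proof of an
implication one obtains an interpolating circuit of polynomial size. -/
def FeasibleInterpolation (Pr : List Bool → List Bool → Prop) : Prop :=
  ∃ s : Polynomial ℕ, ∀ (φ ψ : PropForm) (u : List Bool),
    Pr u (φ.imp ψ).encode →
    ∃ C : Circuit,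
      C.size ≤ s.eval (u.length + (φ.imp ψ).encode.length) ∧ Interpolates C φ ψ

/-! ## Horn formulas -/

/-- A conjunction of atoms. -/
inductive AtomConj : PropForm → Prop
  | var (a : ℕ) : AtomConj (.var a)
  | and {φ ψ : PropForm} : AtomConj φ → AtomConj ψ → AtomConj (φ.and ψ)

/-- An implicational Horn formula: an atom, or `(p₁ ∧ … ∧ p_k) → r` with all
`pᵢ` and `r` atoms. -/
inductive IsHorn : PropForm → Prop
  | atom (a : ℕ) : IsHorn (.var a)
  | imp {φ : PropForm} (r : ℕ) : AtomConj φ → IsHorn (φ.imp (.var r))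

/-! ## Modal formulas -/

/-- Modal propositional formulas. -/
inductive ModalForm : Type where
  | tr : ModalForm
  | fls : ModalForm
  | var : ℕ → ModalForm
  | and : ModalForm → ModalForm → ModalForm
  | or : ModalForm → ModalForm → ModalForm
  | imp : ModalForm → ModalForm → ModalForm
  | box : ModalForm → ModalForm
deriving DecidableEq

/-- Modal negation. -/
def ModalForm.neg (φ : ModalForm) : ModalForm := φ.imp .fls

/-- Substitution for modal formulas. -/
def ModalForm.subst (σ : ℕ → ModalForm) : ModalForm → ModalForm
  | .tr => .tr
  | .fls => .fls
  | .var a => σ a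
  | .and φ ψ => .and (φ.subst σ) (ψ.subst σ)
  | .or φ ψ => .or (φ.subst σ) (ψ.subst σ)
  | .imp φ ψ => .imp (φ.subst σ) (ψ.subst σ)
  | .box φ => .box (φ.subst σ)

/-- The forgetful translation (`□φ ↦ φ`). -/
def ModalForm.forget : ModalForm → PropForm
  | .tr => .tr
  | .fls => .fls
  | .var a => .var a
  | .and φ ψ => .and φ.forget ψ.forget
  | .or φ ψ => .or φ.forget ψ.forget
  | .imp φ ψ => .imp φ.forget ψ.forget
  | .box φ => φ.forget

/-- The collapse translation (`□φ ↦ ⊤`). -/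
def ModalForm.collapse : ModalForm → PropForm
  | .tr => .tr
  | .fls => .fls
  | .var a => .var a
  | .and φ ψ => .and φ.collapse ψ.collapse
  | .or φ ψ => .or φ.collapse ψ.collapse
  | .imp φ ψ => .imp φ.collapse ψ.collapse
  | .box _ => .tr

/-- Hilbert-style provability in the normal modal logic `K` extended by the
axioms in `Ax` (closed under substitution): a classical propositional base,
the distribution axiom, modus ponens, necessitation and substitution. -/
inductive KExt (Ax : Set ModalForm) : ModalForm → Prop
  | axiom' {φ : ModalForm} : φ ∈ Ax → KExt Ax φ
  | mp {φ ψ : ModalForm} : KExt Ax (φ.imp ψ) → KExt Ax φ → KExt Ax ψ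
  | nec {φ : ModalForm} : KExt Ax φ → KExt Ax φ.box
  | subst {φ : ModalForm} (σ : ℕ → ModalForm) : KExt Ax φ → KExt Ax (φ.subst σ)
  | ax1 (φ ψ : ModalForm) : KExt Ax (φ.imp (ψ.imp φ))
  | ax2 (φ ψ χ : ModalForm) : KExt Ax ((φ.imp (ψ.imp χ)).imp ((φ.imp ψ).imp (φ.imp χ)))
  | axAndI (φ ψ : ModalForm) : KExt Ax (φ.imp (ψ.imp (φ.and ψ)))
  | axAndL (φ ψ : ModalForm) : KExt Ax ((φ.and ψ).imp φ)
  | axAndR (φ ψ : ModalForm) : KExt Ax ((φ.and ψ).imp ψ)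
  | axOrL (φ ψ : ModalForm) : KExt Ax (φ.imp (φ.or ψ))
  | axOrR (φ ψ : ModalForm) : KExt Ax (ψ.imp (φ.or ψ))
  | axOrE (φ ψ χ : ModalForm) : KExt Ax ((φ.imp χ).imp ((ψ.imp χ).imp ((φ.or ψ).imp χ)))
  | axFls (φ : ModalForm) : KExt Ax (ModalForm.fls.imp φ)
  | axTr : KExt Ax .tr
  | axDNE (φ : ModalForm) : KExt Ax (φ.neg.neg.imp φ)
  | axK (φ ψ : ModalForm) : KExt Ax (((φ.imp ψ).box).imp (φ.box.imp ψ.box))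

/-- Provability in the basic modal logic `K`. -/
def KProof : ModalForm → Prop := KExt ∅

/-! ## Automatability -/

/-- A proof system for `CPC` is substitutable: substituting constants for some
of the variables transforms proofs with polynomial overhead. -/
def Substitutable (Pr : List Bool → List Bool → Prop) : Prop :=
  ∃ l : Polynomial ℕ, ∀ (φ : PropForm) (σ : ℕ → PropForm) (u : List Bool),
    (∀ a, σ a = .var a ∨ σ a = .tr ∨ σ a = .fls) →
    Pr u φ.encode →
    ∃ u', Pr u' (φ.subst σ).encode ∧ u'.length ≤ l.eval (u.length + φ.encode.length)

/-- Closure under variable-free modus ponens: from a proof of `φ → ψ` with `φ` a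
variable-free tautology one obtains a proof of `ψ` with polynomial overhead. -/
def ClosedUnderVarFreeMP (Pr : List Bool → List Bool → Prop) : Prop :=
  ∃ m : Polynomial ℕ, ∀ (φ ψ : PropForm) (u : List Bool),
    φ.vars = ∅ → φ.Taut → Pr u (φ.imp ψ).encode →
    ∃ u', Pr u' ψ.encode ∧ u'.length ≤ m.eval (u.length + (φ.imp ψ).encode.length)

/-- Automatability (padded formulation): a polynomial-time algorithm which, given a
formula `φ` together with (in unary) any bound `b` on the size of some `Pr`-proof of
`φ`, outputs a `Pr`-proof of `φ`; its running time is thus polynomial in `|φ|` and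
the size of the shortest proof of `φ`. -/
def Automatable (Pr : List Bool → List Bool → Prop) : Prop :=
  ∃ A : List Bool → List Bool, PolyTimeComputable A ∧
    ∀ (φ : PropForm) (b : ℕ),
      (∃ u, Pr u φ.encode ∧ u.length ≤ b) →
      Pr (A (pairEnc φ.encode (List.replicate b true))) φ.encode

/-! ## Frege systems -/

/-- An inference rule: finitely many premises and a conclusion. -/
structure FregeRule : Type where
  prems : List PropForm
  concl : PropForm

/-- `π` is a derivation from assumptions `Γ` in the inference system `F`: every
line is an assumption or follows from earlier lines by a substitution instance
of a rule of `F`. -/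
def IsDerivation (F : List FregeRule) (Γ : List PropForm) (π : List PropForm) : Prop :=
  ∀ (i : ℕ) (hi : i < π.length),
    π.get ⟨i, hi⟩ ∈ Γ ∨
    ∃ R ∈ F, ∃ σ : ℕ → PropForm,
      π.get ⟨i, hi⟩ = R.concl.subst σ ∧
      ∀ p ∈ R.prems, ∃ (j : ℕ) (hj : j < π.length), j < i ∧ π.get ⟨j, hj⟩ = p.subst σ

/-- `φ` is derivable from `Γ` in the inference system `F`. -/
def FregeProves (F : List FregeRule) (Γ : List PropForm) (φ : PropForm) : Prop :=
  ∃ π : List PropForm, IsDerivation F Γ π ∧ φ ∈ π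

/-- The size of a derivation: the total size of its formulas. -/
def derivSize (π : List PropForm) : ℕ := (π.map PropForm.size).sum

/-! ## Graphs encoded as binary strings -/

/-- Adjacency in the graph on `n` vertices encoded by a binary string of length
`n(n-1)/2` (the entry for the pair `{i, j}` with `i < j` is at position
`j(j-1)/2 + i`). -/
def adjOf (w : List Bool) (i j : ℕ) : Bool :=
  if i < j then w.getD (j * (j - 1) / 2 + i) false
  else if j < i then w.getD (i * (i - 1) / 2 + j) false
  else false

/-- The graph encoded by `w` (on `n` vertices) contains a `k`-clique. -/
def HasClique (w : List Bool) (n k : ℕ) : Prop :=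
  ∃ f : Fin k → Fin n, Function.Injective f ∧
    ∀ a b : Fin k, a ≠ b → adjOf w (f a) (f b) = true

/-- The graph encoded by `w` (on `n` vertices) has a proper `l`-coloring. -/
def HasColoring (w : List Bool) (n l : ℕ) : Prop :=
  ∃ c : Fin n → Fin l, ∀ i j : Fin n, adjOf w (i : ℕ) (j : ℕ) = true → c i ≠ c j

/-- The language of graphs (on `n ≥ n₀` vertices) containing a `K(n)`-clique. -/
def CliqueLang (n₀ : ℕ) (K : ℕ → ℕ) : Set (List Bool) :=
  {w | ∃ n, n₀ ≤ n ∧ w.length = n * (n - 1) / 2 ∧ HasClique w n (K n)}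

/-- The language of graphs (on `n ≥ n₀` vertices) that are `L(n)`-colorable. -/
def ColorLang (n₀ : ℕ) (L : ℕ → ℕ) : Set (List Bool) :=
  {w | ∃ n, n₀ ≤ n ∧ w.length = n * (n - 1) / 2 ∧ HasColoring w n (L n)}

/-! ## Substitutions used for the intuitionistic translations -/

/-- The substitution replacing `pᵢ` (`i < m`) by `¬pᵢ`. -/
def negSubst (m : ℕ) : ℕ → PropForm :=
  fun a => if a < m then (PropForm.var a).neg else PropForm.var a

/-- The substitution replacing `pᵢ` (`i < m`) by the fresh variable `q_i := p_{m+i}`. -/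
def shiftSubst (m : ℕ) : ℕ → PropForm :=
  fun a => if a < m then PropForm.var (m + a) else PropForm.var a

/-- `⋀_{i<m} (pᵢ ∨ qᵢ)` where `qᵢ := p_{m+i}`. -/
def pairDisjConj (m : ℕ) : PropForm :=
  conjList ((List.range m).map fun i => (PropForm.var i).or (PropForm.var (m + i)))

/-!
`K + {□p ↔ p}` and `K + {□p}` are the logics of the reflexive and the irreflexive one-point
frame, whose truth conditions are the forgetful and the collapse translation. The engine is a
Kalmár-style lemma: a theory containing `K` that decides boxed formulas as a one-point frame does
decides every variable-free formula (and, under literals fixing the variables, every formula) in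
the same way.

If some `χ ∈ L` has a non-tautologous collapse, a variable-free instance of `χ` is false at the
irreflexive point; under `□⊥` such formulas are decided as at that point, so `¬□⊥ ∈ L`. Under
`¬□⊥` they are decided as at the reflexive point, so a member of `L` with non-tautologous
forgetful translation has a variable-free instance refuted in `L`, and `L` is inconsistent.
The inclusions into the two logics are the same lemma, with the variables eliminated by
excluded middle.
-/
namespace ModalForm

def vars : ModalForm → Finset ℕ
  | .tr => ∅
  | .fls => ∅
  | .var a => {a}
  | .and φ ψ => φ.vars ∪ ψ.vars
  | .or φ ψ => φ.vars ∪ ψ.vars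
  | .imp φ ψ => φ.vars ∪ ψ.vars
  | .box φ => φ.vars

/-- Truth at the single world of the one-point Kripke frame, which is reflexive iff `refl`. -/
def evalPoint (refl : Bool) (v : ℕ → Bool) : ModalForm → Bool
  | .tr => true
  | .fls => false
  | .var a => v a
  | .and φ ψ => φ.evalPoint refl v && ψ.evalPoint refl v
  | .or φ ψ => φ.evalPoint refl v || ψ.evalPoint refl v
  | .imp φ ψ => !φ.evalPoint refl v || ψ.evalPoint refl v
  | .box φ => !refl || φ.evalPoint refl v

theorem eval_forget (v : ℕ → Bool) (φ : ModalForm) : φ.forget.eval v = φ.evalPoint true v := by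
  induction φ <;> simp [forget, evalPoint, PropForm.eval, *]

theorem eval_collapse (v : ℕ → Bool) (φ : ModalForm) :
    φ.collapse.eval v = φ.evalPoint false v := by
  induction φ <;> simp [collapse, evalPoint, PropForm.eval, *]

theorem subst_var (φ : ModalForm) : φ.subst var = φ := by
  induction φ <;> simp [subst, *]

def signed : Bool → ModalForm → ModalForm
  | true, φ => φ
  | false, φ => φ.neg

def impList (Γ : List ModalForm) (φ : ModalForm) : ModalForm := Γ.foldr imp φ

def literals (v : ℕ → Bool) : ℕ → List ModalForm
  | 0 => []
  | m + 1 => signed (v m) (var m) :: literals v m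

theorem signed_mem_literals {v : ℕ → Bool} {a m : ℕ} (h : a < m) :
    signed (v a) (var a) ∈ literals v m := by
  induction m with
  | zero => omega
  | succ m ih =>
    rcases Nat.lt_succ_iff_lt_or_eq.mp h with h | rfl
    · exact List.mem_cons_of_mem _ (ih h)
    · exact List.mem_cons_self

theorem literals_congr {v w : ℕ → Bool} {m : ℕ} (h : ∀ a < m, v a = w a) :
    literals v m = literals w m := by
  induction m with
  | zero => rfl
  | succ m ih =>
    rw [literals, literals, h m m.lt_succ_self, ih fun a ha => h a (Nat.lt_succ_of_lt ha)]

theorem literals_update (v : ℕ → Bool) (m : ℕ) (b : Bool) :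
    literals (Function.update v m b) (m + 1) = signed b (var m) :: literals v m := by
  rw [literals, Function.update_self,
    literals_congr fun a ha => Function.update_of_ne (Nat.ne_of_lt ha) b v]

def constSubst (v : ℕ → Bool) (a : ℕ) : ModalForm := if v a then tr else fls

def trivAxiom : ModalForm := ((var 0).box.imp (var 0)).and ((var 0).imp (var 0).box)

def verAxiom : ModalForm := (var 0).box

end ModalForm

open ModalForm

theorem KExt.mono {Ax Ax' : Set ModalForm} (hAx : Ax ⊆ Ax') {φ : ModalForm} (h : KExt Ax φ) :
    KExt Ax' φ := by
  induction h with
  | axiom' hφ => exact .axiom' (hAx hφ)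
  | mp _ _ ih₁ ih₂ => exact ih₁.mp ih₂
  | nec _ ih => exact ih.nec
  | subst σ _ ih => exact ih.subst σ
  | ax1 => exact .ax1 _ _
  | ax2 => exact .ax2 _ _ _
  | axAndI => exact .axAndI _ _
  | axAndL => exact .axAndL _ _
  | axAndR => exact .axAndR _ _
  | axOrL => exact .axOrL _ _
  | axOrR => exact .axOrR _ _
  | axOrE => exact .axOrE _ _ _
  | axFls => exact .axFls _
  | axTr => exact .axTr
  | axDNE => exact .axDNE _
  | axK => exact .axK _ _

structure IsKTheory (T : Set ModalForm) : Prop where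
  kproof_mem {φ : ModalForm} : KProof φ → φ ∈ T
  mp_mem {φ ψ : ModalForm} : φ.imp ψ ∈ T → φ ∈ T → ψ ∈ T

structure IsNormalLogic (L : Set ModalForm) : Prop extends IsKTheory L where
  subst_mem {φ : ModalForm} (σ : ℕ → ModalForm) : φ ∈ L → φ.subst σ ∈ L
  nec_mem {φ : ModalForm} : φ ∈ L → φ.box ∈ L

theorem isKTheory_kext (Ax : Set ModalForm) : IsKTheory {φ | KExt Ax φ} :=
  ⟨KExt.mono (Set.empty_subset Ax), KExt.mp⟩

namespace IsKTheory

variable {T : Set ModalForm}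

theorem imp_mem (hT : IsKTheory T) {φ : ModalForm} (χ : ModalForm) (h : φ ∈ T) : χ.imp φ ∈ T :=
  hT.mp_mem (hT.kproof_mem (.ax1 φ χ)) h

theorem imp_self_mem (hT : IsKTheory T) (φ : ModalForm) : φ.imp φ ∈ T :=
  hT.mp_mem (hT.mp_mem (hT.kproof_mem (.ax2 φ (φ.imp φ) φ)) (hT.kproof_mem (.ax1 φ _)))
    (hT.kproof_mem (.ax1 φ φ))

theorem assuming (hT : IsKTheory T) (χ : ModalForm) : IsKTheory {φ | χ.imp φ ∈ T} where
  kproof_mem h := hT.imp_mem χ (hT.kproof_mem h)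
  mp_mem h₁ h₂ := hT.mp_mem (hT.mp_mem (hT.kproof_mem (.ax2 _ _ _)) h₁) h₂

theorem assumingList (hT : IsKTheory T) (Γ : List ModalForm) :
    IsKTheory {φ | impList Γ φ ∈ T} := by
  induction Γ generalizing T with
  | nil => exact hT
  | cons χ Γ ih => exact ih (hT.assuming χ)

theorem impList_mem (hT : IsKTheory T) (Γ : List ModalForm) {φ : ModalForm} (h : φ ∈ T) :
    impList Γ φ ∈ T := by
  induction Γ with
  | nil => exact h
  | cons χ Γ ih => exact hT.imp_mem χ ih

theorem impList_mem_of_mem (hT : IsKTheory T) {Γ : List ModalForm} {φ : ModalForm}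
    (h : φ ∈ Γ) : impList Γ φ ∈ T := by
  induction Γ generalizing T with
  | nil => simp at h
  | cons χ Γ ih =>
    rcases List.mem_cons.mp h with rfl | h
    · exact (hT.assuming φ).impList_mem Γ (hT.imp_self_mem φ)
    · exact ih (hT.assuming χ) h

theorem mt_mem (hT : IsKTheory T) {φ ψ : ModalForm} (h : φ.imp ψ ∈ T) (hψ : ψ.neg ∈ T) :
    φ.neg ∈ T :=
  (hT.assuming φ).mp_mem (hT.imp_mem φ hψ)
    ((hT.assuming φ).mp_mem (hT.imp_mem φ h) (hT.imp_self_mem φ))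

theorem imp_mem_of_neg_mem (hT : IsKTheory T) {φ : ModalForm} (ψ : ModalForm) (h : φ.neg ∈ T) :
    φ.imp ψ ∈ T :=
  (hT.assuming φ).mp_mem ((hT.assuming φ).kproof_mem (.axFls ψ))
    ((hT.assuming φ).mp_mem (hT.imp_mem φ h) (hT.imp_self_mem φ))

theorem em_mem (hT : IsKTheory T) (φ : ModalForm) : φ.or φ.neg ∈ T := by
  have hS := hT.assuming (φ.or φ.neg).neg
  have hnφ : φ.neg ∈ {ψ | (φ.or φ.neg).neg.imp ψ ∈ T} :=
    hS.mt_mem (hS.kproof_mem (.axOrL φ φ.neg)) (hT.imp_self_mem _)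
  exact hT.mp_mem (hT.kproof_mem (.axDNE _))
    (hS.mp_mem (hT.imp_self_mem _) (hS.mp_mem (hS.kproof_mem (.axOrR φ φ.neg)) hnφ))

theorem mem_of_imp_of_neg_imp (hT : IsKTheory T) {φ ψ : ModalForm} (h₁ : φ.imp ψ ∈ T)
    (h₂ : φ.neg.imp ψ ∈ T) : ψ ∈ T :=
  hT.mp_mem (hT.mp_mem (hT.mp_mem (hT.kproof_mem (.axOrE _ _ _)) h₁) h₂) (hT.em_mem φ)

theorem signed_and_mem (hT : IsKTheory T) {b₁ b₂ : Bool} {φ ψ : ModalForm}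
    (h₁ : signed b₁ φ ∈ T) (h₂ : signed b₂ ψ ∈ T) : signed (b₁ && b₂) (φ.and ψ) ∈ T := by
  cases b₁
  · exact hT.mt_mem (hT.kproof_mem (.axAndL φ ψ)) h₁
  cases b₂
  · exact hT.mt_mem (hT.kproof_mem (.axAndR φ ψ)) h₂
  · exact hT.mp_mem (hT.mp_mem (hT.kproof_mem (.axAndI φ ψ)) h₁) h₂

theorem signed_or_mem (hT : IsKTheory T) {b₁ b₂ : Bool} {φ ψ : ModalForm}
    (h₁ : signed b₁ φ ∈ T) (h₂ : signed b₂ ψ ∈ T) : signed (b₁ || b₂) (φ.or ψ) ∈ T := by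
  cases b₁
  · cases b₂
    · exact hT.mp_mem (hT.mp_mem (hT.kproof_mem (.axOrE φ ψ .fls)) h₁) h₂
    · exact hT.mp_mem (hT.kproof_mem (.axOrR φ ψ)) h₂
  · exact hT.mp_mem (hT.kproof_mem (.axOrL φ ψ)) h₁

theorem signed_imp_mem (hT : IsKTheory T) {b₁ b₂ : Bool} {φ ψ : ModalForm}
    (h₁ : signed b₁ φ ∈ T) (h₂ : signed b₂ ψ ∈ T) : signed (!b₁ || b₂) (φ.imp ψ) ∈ T := by
  cases b₁
  · exact hT.imp_mem_of_neg_mem ψ h₁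
  cases b₂
  · exact hT.mt_mem ((hT.assuming _).mp_mem (hT.imp_self_mem _) (hT.imp_mem _ h₁)) h₂
  · exact hT.imp_mem φ h₂

theorem signed_evalPoint_mem (hT : IsKTheory T) (refl : Bool) (v : ℕ → Bool)
    (σ : ℕ → ModalForm) (hbox : ∀ b φ, signed b φ ∈ T → signed (!refl || b) φ.box ∈ T) :
    ∀ θ : ModalForm, (∀ a ∈ θ.vars, signed (v a) (σ a) ∈ T) →
      signed (θ.evalPoint refl v) (θ.subst σ) ∈ T
  | .tr, _ => hT.kproof_mem .axTr
  | .fls, _ => hT.imp_self_mem .fls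
  | .var a, h => h a (Finset.mem_singleton_self a)
  | .and φ ψ, h => hT.signed_and_mem
      (signed_evalPoint_mem hT refl v σ hbox φ fun a ha => h a (Finset.mem_union_left _ ha))
      (signed_evalPoint_mem hT refl v σ hbox ψ fun a ha => h a (Finset.mem_union_right _ ha))
  | .or φ ψ, h => hT.signed_or_mem
      (signed_evalPoint_mem hT refl v σ hbox φ fun a ha => h a (Finset.mem_union_left _ ha))
      (signed_evalPoint_mem hT refl v σ hbox ψ fun a ha => h a (Finset.mem_union_right _ ha))
  | .imp φ ψ, h => hT.signed_imp_mem
      (signed_evalPoint_mem hT refl v σ hbox φ fun a ha => h a (Finset.mem_union_left _ ha))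
      (signed_evalPoint_mem hT refl v σ hbox ψ fun a ha => h a (Finset.mem_union_right _ ha))
  | .box φ, h => hbox _ _ (signed_evalPoint_mem hT refl v σ hbox φ h)

theorem signed_constSubst_mem (hT : IsKTheory T) (v : ℕ → Bool) (a : ℕ) :
    signed (v a) (constSubst v a) ∈ T := by
  unfold constSubst
  cases v a
  · exact hT.imp_self_mem .fls
  · exact hT.kproof_mem .axTr

theorem mem_of_forall_impList_literals (hT : IsKTheory T) {ψ : ModalForm} (m : ℕ)
    (h : ∀ v, impList (literals v m) ψ ∈ T) : ψ ∈ T := by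
  induction m with
  | zero => exact h fun _ => false
  | succ m ih =>
    refine ih fun v => hT.mem_of_imp_of_neg_imp (φ := var m) ?_ ?_
    · have hv := h (Function.update v m true)
      rwa [literals_update] at hv
    · have hv := h (Function.update v m false)
      rwa [literals_update] at hv

/-- The box condition is needed under arbitrary hypotheses `Γ` because the variables are
eliminated by fixing them with literals. -/
theorem mem_of_forall_evalPoint (hT : IsKTheory T) (refl : Bool)
    (hbox : ∀ Γ b φ, impList Γ (signed b φ) ∈ T → impList Γ (signed (!refl || b) φ.box) ∈ T)
    {χ : ModalForm} (h : ∀ v, χ.evalPoint refl v = true) : χ ∈ T := by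
  refine hT.mem_of_forall_impList_literals (χ.vars.sup id + 1) fun v => ?_
  have hχ := (hT.assumingList _).signed_evalPoint_mem refl v var (hbox _) χ fun a ha =>
    hT.impList_mem_of_mem (signed_mem_literals (Nat.lt_succ_of_le (Finset.le_sup (f := id) ha)))
  rwa [h v, subst_var] at hχ

end IsKTheory

theorem KExt.trivAxiom_of_forget_taut {χ : ModalForm} (h : χ.forget.Taut) :
    KExt {trivAxiom} χ := by
  have hT := isKTheory_kext {trivAxiom}
  have htriv (φ : ModalForm) : KExt {trivAxiom} ((φ.box.imp φ).and (φ.imp φ.box)) :=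
    (KExt.axiom' (Set.mem_singleton _)).subst fun _ => φ
  refine hT.mem_of_forall_evalPoint true (fun Γ b φ hφ => ?_) fun v => by rw [← eval_forget, h v]
  have hS := hT.assumingList Γ
  cases b
  · exact hS.mt_mem (hT.impList_mem Γ (KExt.mp (.axAndL _ _) (htriv φ))) hφ
  · exact hS.mp_mem (hT.impList_mem Γ (KExt.mp (.axAndR _ _) (htriv φ))) hφ

theorem KExt.verAxiom_of_collapse_taut {χ : ModalForm} (h : χ.collapse.Taut) :
    KExt {verAxiom} χ :=
  (isKTheory_kext {verAxiom}).mem_of_forall_evalPoint false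
    (fun Γ _ φ _ =>
      (isKTheory_kext _).impList_mem Γ ((KExt.axiom' (Set.mem_singleton _)).subst fun _ => φ))
    fun v => by rw [← eval_collapse, h v]

namespace IsNormalLogic

variable {L : Set ModalForm}

theorem neg_box_fls_mem_of_collapse_eval_false (hL : IsNormalLogic L) {χ : ModalForm}
    {v : ℕ → Bool} (hχ : χ ∈ L) (hv : χ.collapse.eval v = false) : ModalForm.fls.box.neg ∈ L := by
  have hS := hL.assuming ModalForm.fls.box
  have hneg := hS.signed_evalPoint_mem false v (constSubst v)
    (fun _ φ _ => hL.kproof_mem ((KExt.axK _ φ).mp (KExt.axFls φ).nec)) χ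
    fun a _ => hS.signed_constSubst_mem v a
  rw [← eval_collapse, hv] at hneg
  exact hS.mp_mem hneg (hL.imp_mem _ (hL.subst_mem _ hχ))

theorem fls_mem_of_forget_eval_false (hL : IsNormalLogic L) (hD : ModalForm.fls.box.neg ∈ L)
    {χ : ModalForm} {v : ℕ → Bool} (hχ : χ ∈ L) (hv : χ.forget.eval v = false) :
    ModalForm.fls ∈ L := by
  have hbox : ∀ b φ, signed b φ ∈ L → signed (!true || b) φ.box ∈ L
    | true, _, hφ => hL.nec_mem hφ
    | false, φ, hφ => hL.mt_mem (hL.mp_mem (hL.kproof_mem (.axK φ .fls)) (hL.nec_mem hφ)) hD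
  have hneg := hL.signed_evalPoint_mem true v (constSubst v) hbox χ
    fun a _ => hL.signed_constSubst_mem v a
  rw [← eval_forget, hv] at hneg
  exact hL.mp_mem hneg (hL.subst_mem _ hχ)

theorem forget_taut_or_collapse_taut (hL : IsNormalLogic L) (hcons : ModalForm.fls ∉ L) :
    (∀ χ ∈ L, χ.forget.Taut) ∨ (∀ χ ∈ L, χ.collapse.Taut) := by
  by_contra! h
  obtain ⟨⟨χ₁, hχ₁, h₁⟩, χ₂, hχ₂, h₂⟩ := h
  simp only [PropForm.Taut, not_forall, Bool.not_eq_true] at h₁ h₂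
  obtain ⟨v₁, hv₁⟩ := h₁
  obtain ⟨v₂, hv₂⟩ := h₂
  have hD := hL.neg_box_fls_mem_of_collapse_eval_false hχ₂ hv₂
  exact hcons (hL.fls_mem_of_forget_eval_false hD hχ₁ hv₁)

end IsNormalLogic

/-- Makinson's theorem: every consistent normal modal logic is
contained in `K + {□p ↔ p}` or in `K + {□p}`; consequently either the forgetful
translation of every member of `L` is a classical tautology, or the collapse
translation of every member of `L` is a classical tautology. -/
theorem makinson (L : Set ModalForm)
    (hK : ∀ φ, KProof φ → φ ∈ L)
    (hsubst : ∀ (φ : ModalForm) (σ : ℕ → ModalForm), φ ∈ L → φ.subst σ ∈ L)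
    (hmp : ∀ φ ψ : ModalForm, φ.imp ψ ∈ L → φ ∈ L → ψ ∈ L)
    (hnec : ∀ φ : ModalForm, φ ∈ L → φ.box ∈ L)
    (hcons : ModalForm.fls ∉ L) :
    ((∀ χ ∈ L, KExt {(((ModalForm.var 0).box.imp (ModalForm.var 0)).and
        ((ModalForm.var 0).imp (ModalForm.var 0).box))} χ) ∨
      (∀ χ ∈ L, KExt {(ModalForm.var 0).box} χ)) ∧
    ((∀ χ ∈ L, χ.forget.Taut) ∨ (∀ χ ∈ L, χ.collapse.Taut)) := by
  have hL : IsNormalLogic L := ⟨⟨hK _, hmp _ _⟩, hsubst _, hnec _⟩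
  have h := hL.forget_taut_or_collapse_taut hcons
  exact ⟨h.imp (fun hf χ hχ => KExt.trivAxiom_of_forget_taut (hf χ hχ))
    (fun hc χ hχ => KExt.verAxiom_of_collapse_taut (hc χ hχ)), h⟩
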